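/- arXiv:1604.01104 — 4 statements merged into one kernel-verified Lean document; each statement's English description precedes it below -/
import Mathlib

section
/- In the group algebra of S_n, let X_n = ∑_{a=1}^{n-1} (a n) be the n-th Jucys–Murphy element, and define polynomials P_l^{n-1} by P_0 = 1, P_1(x) = x, P_2(x) = x² - (n-1), and P_l(x) = x·P_{l-1}(x) - (n-2)·P_{l-2}(x) for l ≥ 3. Then P_l^{n-1}(X_n) = ∑ (a_1 n)(a_2 n)⋯(a_l n), where the sum is over all tuples (a_1,…,a_l) with 1 ≤ a_i ≤ n-1 and a_i ≠ a_{i+1} for all 1 ≤ i ≤ l-1. -/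
open Polynomial

/-- The modified Chebyshev polynomials `P_l^m`:
`P_0 = 1`, `P_1 = x`, `P_2 = x² - m`, and
`P_l = x P_{l-1} - (m-1) P_{l-2}` for `l ≥ 3`. -/
noncomputable def modCheb (m : ℚ) : ℕ → Polynomial ℚ
  | 0 => 1
  | 1 => X
  | 2 => X ^ 2 - C m
  | l + 3 => X * modCheb m (l + 2) - C (m - 1) * modCheb m (l + 1)

/-- Tuples `(a_1, …, a_l)` of letters distinct from the top letter `n`,
with `a_i ≠ a_{i+1}` for all `i`.  (Working in `S_{n+1} = Perm (Fin (n+1))`,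
the top letter is `Fin.last n` and there are `n` other letters.) -/
noncomputable def validTuples (n l : ℕ) : Finset (Fin l → Fin (n + 1)) := by
  classical
  exact Finset.univ.filter (fun a =>
    (∀ i, a i ≠ Fin.last n) ∧
    ∀ i : Fin l, ∀ h : (i : ℕ) + 1 < l, a i ≠ a ⟨(i : ℕ) + 1, h⟩)

set_option maxRecDepth 4000

variable (n : ℕ)

noncomputable def TT (a : Fin (n+1)) : MonoidAlgebra ℚ (Equiv.Perm (Fin (n+1))) :=
  MonoidAlgebra.of ℚ _ (Equiv.swap a (Fin.last n))

lemma TT_mul_self (a : Fin (n+1)) : TT n a * TT n a = 1 := by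
  rw [TT, ← map_mul, Equiv.swap_mul_self, map_one]

noncomputable def Pr (l : ℕ) (a : Fin l → Fin (n+1)) : MonoidAlgebra ℚ (Equiv.Perm (Fin (n+1))) :=
  ((List.finRange l).map (fun i => TT n (a i))).prod

lemma Pr_cons (l : ℕ) (b : Fin (n+1)) (a : Fin l → Fin (n+1)) :
    Pr n (l+1) (Fin.cons b a) = TT n b * Pr n l a := by
  simp [Pr, List.finRange_succ, List.map_map, Function.comp_def, Fin.cons_succ]

def cnd (l : ℕ) (a : Fin l → Fin (n+1)) : Prop :=
  (∀ i, a i ≠ Fin.last n) ∧ ∀ i : Fin l, ∀ h : (i : ℕ) + 1 < l, a i ≠ a ⟨(i : ℕ) + 1, h⟩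

lemma cnd_cons (l : ℕ) (b : Fin (n+1)) (a : Fin l → Fin (n+1)) :
    cnd n (l+1) (Fin.cons b a) ↔ b ≠ Fin.last n ∧ cnd n l a ∧ ∀ h : 0 < l, b ≠ a ⟨0, h⟩ := by
  constructor
  · rintro ⟨h1, h2⟩
    refine ⟨by simpa using h1 0, ⟨fun i => ?_, fun i hi => ?_⟩, fun h => ?_⟩
    · have := h1 i.succ; rwa [Fin.cons_succ] at this
    · have hlt : (i.succ : ℕ) + 1 < l + 1 := by simpa using hi
      have := h2 i.succ hlt
      rw [Fin.cons_succ] at this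
      have e : (⟨(i.succ : ℕ) + 1, hlt⟩ : Fin (l+1)) = Fin.succ ⟨(i:ℕ)+1, hi⟩ := by
        ext; simp
      rwa [e, Fin.cons_succ] at this
    · have hlt : ((0 : Fin (l+1)) : ℕ) + 1 < l + 1 := by simpa using h
      have := h2 0 hlt
      rw [Fin.cons_zero] at this
      have e : (⟨((0 : Fin (l+1)) : ℕ) + 1, hlt⟩ : Fin (l+1)) = Fin.succ ⟨0, h⟩ := by
        ext; simp
      rwa [e, Fin.cons_succ] at this
  · rintro ⟨hb, ⟨h1, h2⟩, h3⟩
    constructor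
    · intro i
      refine Fin.cases ?_ ?_ i
      · rw [Fin.cons_zero]; exact hb
      · intro j; rw [Fin.cons_succ]; exact h1 j
    · intro i hi
      refine Fin.cases ?_ ?_ i hi
      · intro h
        have h0 : 0 < l := by simpa using h
        have e : (⟨((0 : Fin (l+1)) : ℕ) + 1, h⟩ : Fin (l+1)) = Fin.succ ⟨0, h0⟩ := by
          ext; simp
        rw [Fin.cons_zero, e, Fin.cons_succ]
        exact h3 h0
      · intro j h
        have hj : (j:ℕ)+1 < l := by simpa using h
        have e : (⟨((j.succ : Fin (l+1)) : ℕ) + 1, h⟩ : Fin (l+1)) = Fin.succ ⟨(j:ℕ)+1, hj⟩ := by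
          ext; simp
        rw [Fin.cons_succ, e, Fin.cons_succ]
        exact h2 j hj

lemma sum_pi_succ {M : Type*} [AddCommMonoid M] (l : ℕ)
    (f : (Fin (l+1) → Fin (n+1)) → M) :
    (∑ c : Fin (l+1) → Fin (n+1), f c)
      = ∑ b : Fin (n+1), ∑ a : Fin l → Fin (n+1), f (Fin.cons b a) := by
  rw [← Equiv.sum_comp (Fin.consEquiv fun _ => Fin (n+1)) f, Fintype.sum_prod_type]
  rfl

open scoped Classical in
noncomputable def S (l : ℕ) : MonoidAlgebra ℚ (Equiv.Perm (Fin (n+1))) :=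
  ∑ a : Fin l → Fin (n+1), if cnd n l a then Pr n l a else 0

lemma cnd_zero (a : Fin 0 → Fin (n+1)) : cnd n 0 a := by
  exact ⟨fun i => i.elim0, fun i => i.elim0⟩

lemma S_zero : S n 0 = 1 := by
  rw [S]
  rw [Finset.sum_eq_single (fun i => i.elim0)]
  · rw [if_pos (cnd_zero n _)]; simp [Pr]
  · intro b _ hb; exact absurd (funext fun i : Fin 0 => i.elim0) hb
  · intro h; exact absurd (Finset.mem_univ _) h


open scoped Classical

noncomputable def XX : MonoidAlgebra ℚ (Equiv.Perm (Fin (n+1))) :=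
  ∑ b : Fin (n+1), if b ≠ Fin.last n then TT n b else 0

lemma sum_ite_const {ι M : Type*} [Fintype ι] [AddCommMonoid M] (p : Prop) [Decidable p]
    (f : ι → M) : ∑ i, (if p then f i else 0) = if p then ∑ i, f i else 0 := by
  split <;> simp

lemma ite_split {M : Type*} [AddCommMonoid M] (p q : Prop) [Decidable p] [Decidable q] (v : M) :
    (if p then v else 0) = (if p ∧ q then v else 0) + (if p ∧ ¬q then v else 0) := by
  by_cases hp : p <;> by_cases hq : q <;> simp [hp, hq]

lemma S_succ (l : ℕ) : S n (l+1) = ∑ b : Fin (n+1), ∑ a : Fin l → Fin (n+1),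
    if b ≠ Fin.last n ∧ cnd n l a ∧ ∀ h : 0 < l, b ≠ a ⟨0, h⟩
    then TT n b * Pr n l a else 0 := by
  rw [S, sum_pi_succ]
  refine Finset.sum_congr rfl fun b _ => Finset.sum_congr rfl fun a _ => ?_
  rw [Pr_cons]
  exact if_congr (cnd_cons n l b a) rfl rfl

lemma S_one : S n 1 = XX n := by
  rw [S_succ, XX]
  refine Finset.sum_congr rfl fun b _ => ?_
  rw [Fintype.sum_unique]
  have h0 : ¬ (0:ℕ) < 0 := by omega
  by_cases hb : b ≠ Fin.last n
  · rw [if_pos ⟨hb, cnd_zero n _, fun h => absurd h h0⟩, if_pos hb]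
    simp [Pr]
  · rw [if_neg (by tauto), if_neg hb]

lemma X_mul_S (k : ℕ) :
    XX n * S n (k+1) = S n (k+2) +
      ∑ a : Fin k → Fin (n+1), if cnd n k a then
        ((Finset.univ.filter fun b : Fin (n+1) =>
          b ≠ Fin.last n ∧ ∀ h : 0 < k, b ≠ a ⟨0, h⟩).card) • Pr n k a else 0 := by
  rw [XX, S, Fintype.sum_mul_sum]
  have step1 : ∀ b : Fin (n+1), ∀ c : Fin (k+1) → Fin (n+1),
      (if b ≠ Fin.last n then TT n b else 0) * (if cnd n (k+1) c then Pr n (k+1) c else 0)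
      = (if cnd n (k+2) (Fin.cons b c) then Pr n (k+2) (Fin.cons b c) else 0)
        + (if (b ≠ Fin.last n ∧ cnd n (k+1) c) ∧ b = c 0 then TT n b * Pr n (k+1) c else 0) := by
    intro b c
    rw [ite_zero_mul_ite_zero, ite_split _ (b ≠ c 0), Pr_cons]
    simp only [not_not]
    refine congrArg₂ (· + ·) (if_congr ?_ rfl rfl) rfl
    rw [cnd_cons]
    constructor
    · rintro ⟨⟨h1, h2⟩, h3⟩
      exact ⟨h1, h2, fun h => by rw [Fin.mk_zero]; exact h3⟩
    · rintro ⟨h1, h2, h3⟩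
      have := h3 (Nat.succ_pos k)
      rw [Fin.mk_zero] at this
      exact ⟨⟨h1, h2⟩, this⟩
  simp only [step1]
  simp only [Finset.sum_add_distrib]
  congr 1
  · rw [S, sum_pi_succ]
  · -- second piece
    have expand : ∀ b : Fin (n+1),
        (∑ c : Fin (k+1) → Fin (n+1),
          if (b ≠ Fin.last n ∧ cnd n (k+1) c) ∧ b = c 0 then TT n b * Pr n (k+1) c else 0)
        = ∑ b' : Fin (n+1), ∑ a' : Fin k → Fin (n+1),
            if (b ≠ Fin.last n ∧ cnd n (k+1) (Fin.cons b' a')) ∧ b = b'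
            then TT n b * Pr n (k+1) (Fin.cons b' a') else 0 := by
      intro b
      rw [sum_pi_succ]
      refine Finset.sum_congr rfl fun b' _ => Finset.sum_congr rfl fun a' _ => ?_
      rw [Fin.cons_zero]
    simp only [expand]
    have evalb : ∀ (b' : Fin (n+1)) (a' : Fin k → Fin (n+1)),
        (∑ b : Fin (n+1),
          if (b ≠ Fin.last n ∧ cnd n (k+1) (Fin.cons b' a')) ∧ b = b'
          then TT n b * Pr n (k+1) (Fin.cons b' a') else 0)
        = if cnd n k a' then
            (if b' ≠ Fin.last n ∧ ∀ h : 0 < k, b' ≠ a' ⟨0, h⟩ then Pr n k a' else 0) else 0 := by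
      intro b' a'
      have key : ∀ b : Fin (n+1),
          (if (b ≠ Fin.last n ∧ cnd n (k+1) (Fin.cons b' a')) ∧ b = b'
            then TT n b * Pr n (k+1) (Fin.cons b' a') else 0)
          = if b = b' then (if cnd n k a' then
              (if b' ≠ Fin.last n ∧ ∀ h : 0 < k, b' ≠ a' ⟨0, h⟩ then Pr n k a' else 0) else 0)
            else 0 := by
        intro b
        by_cases hbb : b = b'
        · subst hbb
          rw [if_pos rfl]
          by_cases h1 : cnd n k a'
          · rw [if_pos h1]
            by_cases h2 : b ≠ Fin.last n ∧ ∀ h : 0 < k, b ≠ a' ⟨0, h⟩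
            · rw [if_pos h2,
                if_pos ⟨⟨h2.1, (cnd_cons n k b a').mpr ⟨h2.1, h1, h2.2⟩⟩, rfl⟩,
                Pr_cons, ← mul_assoc, TT_mul_self, one_mul]
            · rw [if_neg h2, if_neg ?_]
              rintro ⟨⟨hb, hc⟩, -⟩
              obtain ⟨hb', h1', hq⟩ := (cnd_cons n k b a').mp hc
              exact h2 ⟨hb, hq⟩
          · rw [if_neg h1, if_neg ?_]
            rintro ⟨⟨hb, hc⟩, -⟩
            exact h1 ((cnd_cons n k b a').mp hc).2.1
        · rw [if_neg (fun hh => hbb hh.2), if_neg hbb]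
      rw [Finset.sum_congr rfl (fun b _ => key b), Fintype.sum_ite_eq']
    rw [Finset.sum_comm]
    have inner : ∀ b' : Fin (n+1),
        (∑ b : Fin (n+1), ∑ a' : Fin k → Fin (n+1),
          if (b ≠ Fin.last n ∧ cnd n (k+1) (Fin.cons b' a')) ∧ b = b'
          then TT n b * Pr n (k+1) (Fin.cons b' a') else 0)
        = ∑ a' : Fin k → Fin (n+1), if cnd n k a' then
            (if b' ≠ Fin.last n ∧ ∀ h : 0 < k, b' ≠ a' ⟨0, h⟩ then Pr n k a' else 0) else 0 := by
      intro b'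
      rw [Finset.sum_comm]
      exact Finset.sum_congr rfl fun a' _ => evalb b' a'
    simp only [inner]
    rw [Finset.sum_comm]
    refine Finset.sum_congr rfl fun a' _ => ?_
    rw [sum_ite_const]
    by_cases h : cnd n k a'
    · rw [if_pos h, if_pos h, ← Finset.sum_filter, Finset.sum_const]
    · rw [if_neg h, if_neg h]

lemma card_ne_last : (Finset.univ.filter fun b : Fin (n+1) => b ≠ Fin.last n).card = n := by
  have : (Finset.univ.filter fun b : Fin (n+1) => b ≠ Fin.last n)
      = ({Fin.last n} : Finset (Fin (n+1)))ᶜ := by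
    ext b; simp
  rw [this, Finset.card_compl, Finset.card_singleton, Fintype.card_fin]
  omega

lemma card_ne_ne (x y : Fin (n+1)) (hxy : x ≠ y) :
    (Finset.univ.filter fun b : Fin (n+1) => b ≠ x ∧ b ≠ y).card = n - 1 := by
  have : (Finset.univ.filter fun b : Fin (n+1) => b ≠ x ∧ b ≠ y)
      = ({x, y} : Finset (Fin (n+1)))ᶜ := by
    ext b; simp [not_or]
  rw [this, Finset.card_compl, Finset.card_insert_of_notMem (by simpa using hxy),
    Finset.card_singleton, Fintype.card_fin]
  omega

lemma S_two : S n 2 = XX n * XX n - (n : ℚ) • 1 := by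
  have h := X_mul_S n 0
  rw [S_one] at h
  have h2 : (∑ a : Fin 0 → Fin (n+1), if cnd n 0 a then
      ((Finset.univ.filter fun b : Fin (n+1) =>
        b ≠ Fin.last n ∧ ∀ h : 0 < 0, b ≠ a ⟨0, h⟩).card) • Pr n 0 a else 0)
      = (n : ℚ) • 1 := by
    rw [Fintype.sum_unique, if_pos (cnd_zero n _)]
    have e1 : ∀ a : Fin 0 → Fin (n+1), (Finset.univ.filter fun b : Fin (n+1) =>
        b ≠ Fin.last n ∧ ∀ h : 0 < 0, b ≠ a ⟨0, h⟩)
        = Finset.univ.filter fun b : Fin (n+1) => b ≠ Fin.last n := by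
      intro a
      ext b
      simp only [Finset.mem_filter, and_congr_right_iff]
      intro _
      constructor
      · rintro ⟨h, -⟩; exact h
      · intro h; exact ⟨h, fun hh => absurd hh (by omega)⟩
    have e2 : ∀ a : Fin 0 → Fin (n+1), Pr n 0 a = 1 := by intro a; simp [Pr]
    rw [e1, e2, card_ne_last, ← Nat.cast_smul_eq_nsmul ℚ]
  rw [h2] at h
  rw [eq_sub_iff_add_eq, ← h]

lemma cnd_head_ne (k : ℕ) (a : Fin (k+1) → Fin (n+1)) (h : cnd n (k+1) a) :
    a 0 ≠ Fin.last n := h.1 0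

lemma X_mul_S' (k : ℕ) :
    XX n * S n (k+2) = S n (k+3) + ((n : ℚ) - 1) • S n (k+1) := by
  have h := X_mul_S n (k+1)
  rw [h]
  congr 1
  have pointwise : ∀ a : Fin (k+1) → Fin (n+1),
      (if cnd n (k+1) a then
        ((Finset.univ.filter fun b : Fin (n+1) =>
          b ≠ Fin.last n ∧ ∀ h : 0 < k+1, b ≠ a ⟨0, h⟩).card) • Pr n (k+1) a else 0)
      = if cnd n (k+1) a then ((n : ℚ) - 1) • Pr n (k+1) a else 0 := by
    intro a
    by_cases hc : cnd n (k+1) a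
    · rw [if_pos hc, if_pos hc]
      have hne : a 0 ≠ Fin.last n := hc.1 0
      have hn : 1 ≤ n := by
        rcases Nat.eq_zero_or_pos n with rfl | h
        · refine absurd (Fin.ext ?_) hne
          have h1 := (a 0).isLt
          have : ((a 0 : Fin 1) : ℕ) = 0 := by omega
          rw [this, Fin.val_last]
        · exact h
      have e1 : (Finset.univ.filter fun b : Fin (n+1) =>
          b ≠ Fin.last n ∧ ∀ h : 0 < k+1, b ≠ a ⟨0, h⟩)
          = Finset.univ.filter fun b : Fin (n+1) => b ≠ Fin.last n ∧ b ≠ a 0 := by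
        ext b
        simp only [Finset.mem_filter, and_congr_right_iff]
        intro _ _
        constructor
        · intro h2
          have := h2 (Nat.succ_pos k)
          rwa [Fin.mk_zero] at this
        · intro h2 _
          rwa [Fin.mk_zero]
      rw [e1, card_ne_ne n _ _ (Ne.symm hne), ← Nat.cast_smul_eq_nsmul ℚ,
        Nat.cast_sub hn, Nat.cast_one]
    · rw [if_neg hc, if_neg hc]
  rw [Finset.sum_congr rfl fun a _ => pointwise a, S, Finset.smul_sum]
  refine Finset.sum_congr rfl fun a _ => ?_
  rw [smul_ite, smul_zero]

lemma S_eq (l : ℕ) :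
    (∑ a ∈ validTuples n l, Pr n l a) = S n l := by
  rw [S, ← Finset.sum_filter]
  congr 1
  ext a
  unfold validTuples
  simp only [Finset.mem_filter, Finset.mem_univ, true_and]
  rfl

theorem modCheb_JM_eq_sum_nonbacktracking' (l : ℕ) :
    Polynomial.aeval (XX n) (modCheb (n : ℚ) l) = S n l := by
  induction l using Nat.strong_induction_on with
  | _ l ih =>
    match l with
    | 0 => rw [modCheb, map_one, S_zero]
    | 1 => rw [modCheb, aeval_X, S_one]
    | 2 =>
      rw [modCheb, map_sub, map_pow, aeval_X, aeval_C, S_two, sq,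
        Algebra.algebraMap_eq_smul_one]
    | (l+3) =>
      rw [modCheb, map_sub, map_mul, map_mul, aeval_X, aeval_C,
        ih (l+2) (by omega), ih (l+1) (by omega), X_mul_S',
        ← Algebra.smul_def, add_sub_cancel_right]



/-- **Okounkov's non-backtracking expansion of `P_l(X_n)`** (Lemma `l:cheb`).
In the group algebra of `S_{n+1}`, with `X = ∑_{a ≠ n} (a n)` the top
Jucys–Murphy element, `P_l^{n}(X)` equals the sum of the products
`(a_1 n)(a_2 n)⋯(a_l n)` over all tuples with `a_i ≠ n` and `a_i ≠ a_{i+1}`. -/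
theorem modCheb_JM_eq_sum_nonbacktracking (n l : ℕ) :
    Polynomial.aeval
        (∑ a ∈ Finset.univ.filter (fun a : Fin (n + 1) => a ≠ Fin.last n),
          MonoidAlgebra.of ℚ (Equiv.Perm (Fin (n + 1)))
            (Equiv.swap a (Fin.last n)))
        (modCheb (n : ℚ) l)
      = ∑ a ∈ validTuples n l,
          ((List.finRange l).map (fun i =>
            MonoidAlgebra.of ℚ (Equiv.Perm (Fin (n + 1)))
              (Equiv.swap (a i) (Fin.last n)))).prod := by
  have hx : (∑ a ∈ Finset.univ.filter (fun a : Fin (n + 1) => a ≠ Fin.last n),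
      MonoidAlgebra.of ℚ (Equiv.Perm (Fin (n + 1))) (Equiv.swap a (Fin.last n))) = XX n := by
    rw [XX, Finset.sum_filter]
    rfl
  rw [hx, modCheb_JM_eq_sum_nonbacktracking', ← S_eq]
  rfl
end

section
/- For all real λ and all integers r ≥ 0: λ^{2r} = (1/((2r+1)·2^{2r})) ∑_{m=0}^{r} (2m+1) · C(2r+1, r-m) · U_{2m}(λ), where U denotes Chebyshev polynomials of the second kind and C(·,·) binomial coefficients. -/
open Finset

/-- binomial coefficient with integer lower index, zero out of range. -/
noncomputable def chZ (n : ℕ) (k : ℤ) : ℝ :=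
  if 0 ≤ k then (n.choose k.toNat : ℝ) else 0

lemma chZ_pascal (n : ℕ) (k : ℤ) : chZ (n + 1) k = chZ n k + chZ n (k - 1) := by
  unfold chZ
  rcases lt_trichotomy k 0 with h | h | h
  · rw [if_neg (by omega), if_neg (by omega), if_neg (by omega)]; ring
  · subst h; norm_num
  · rw [if_pos (by omega), if_pos (by omega), if_pos (by omega)]
    obtain ⟨j, rfl⟩ : ∃ j : ℕ, k = (j : ℤ) + 1 := ⟨(k - 1).toNat, by omega⟩
    have h1 : ((j : ℤ) + 1).toNat = j + 1 := by omega
    have h2 : ((j : ℤ) + 1 - 1).toNat = j := by omega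
    rw [h1, h2, Nat.choose_succ_succ]
    push_cast; ring

lemma chZ_pascal2 (n : ℕ) (k : ℤ) :
    chZ (n + 2) k = chZ n k + 2 * chZ n (k - 1) + chZ n (k - 2) := by
  rw [show n + 2 = (n + 1) + 1 from rfl, chZ_pascal, chZ_pascal, chZ_pascal,
    show k - 1 - 1 = k - 2 by ring]
  ring

lemma chZ_eq_zero_of_lt (n : ℕ) (k : ℤ) (h : (n : ℤ) < k) : chZ n k = 0 := by
  unfold chZ
  rw [if_pos (by omega), Nat.choose_eq_zero_of_lt (by omega)]; norm_num

lemma chZ_eq_zero_of_neg (n : ℕ) (k : ℤ) (h : k < 0) : chZ n k = 0 := by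
  unfold chZ; rw [if_neg (by omega)]

/-- the coefficient `C(2r, r-m) - C(2r, r+m+1)` (valid for all integer `m`). -/
noncomputable def bb (r : ℕ) (m : ℤ) : ℝ :=
  chZ (2 * r) ((r : ℤ) - m) - chZ (2 * r) ((r : ℤ) + m + 1)

lemma bb_rec (r : ℕ) (m : ℤ) :
    bb (r + 1) m = bb r (m - 1) + 2 * bb r m + bb r (m + 1) := by
  unfold bb
  rw [show 2 * (r + 1) = 2 * r + 2 from rfl,
    show ((r : ℕ) + 1 : ℕ) = r + 1 from rfl]
  push_cast
  rw [show ((r : ℤ) + 1 - m) = ((r : ℤ) - m + 1) by ring,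
    show ((r : ℤ) + 1 + m + 1) = ((r : ℤ) + m + 2) by ring,
    chZ_pascal2, chZ_pascal2]
  rw [show (r : ℤ) - m + 1 - 1 = (r : ℤ) - m by ring,
    show (r : ℤ) - m + 1 - 2 = (r : ℤ) - (m + 1) by ring,
    show (r : ℤ) + m + 2 - 1 = (r : ℤ) + m + 1 by ring,
    show (r : ℤ) + m + 2 - 2 = (r : ℤ) + m by ring,
    show (r : ℤ) - (m - 1) = (r : ℤ) - m + 1 by ring,
    show (r : ℤ) + (m - 1) + 1 = (r : ℤ) + m by ring,
    show (r : ℤ) + (m + 1) + 1 = (r : ℤ) + m + 2 by ring]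
  ring

lemma bb_zero_of_gt (r : ℕ) (m : ℤ) (h : (r : ℤ) < m) : bb r m = 0 := by
  unfold bb
  rw [chZ_eq_zero_of_neg _ _ (by omega), chZ_eq_zero_of_lt _ _ (by push_cast; omega)]
  ring

lemma bb_neg_one (r : ℕ) : bb r (-1) = - bb r 0 := by
  unfold bb
  rw [show (r : ℤ) - (-1) = (r : ℤ) + 0 + 1 by ring,
    show (r : ℤ) + (-1) + 1 = (r : ℤ) - 0 by ring]
  ring


lemma U_eval_rec (lam : ℝ) (n : ℤ) :
    4 * lam ^ 2 * (Polynomial.Chebyshev.U ℝ n).eval lam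
      = (Polynomial.Chebyshev.U ℝ (n + 2)).eval lam
        + 2 * (Polynomial.Chebyshev.U ℝ n).eval lam
        + (Polynomial.Chebyshev.U ℝ (n - 2)).eval lam := by
  have e1 := congrArg (Polynomial.eval lam) (Polynomial.Chebyshev.U_add_two ℝ n)
  have e2 := congrArg (Polynomial.eval lam) (Polynomial.Chebyshev.U_add_two ℝ (n - 1))
  have e3 := congrArg (Polynomial.eval lam) (Polynomial.Chebyshev.U_add_two ℝ (n - 2))
  simp only [Polynomial.eval_sub, Polynomial.eval_mul, Polynomial.eval_ofNat,
    Polynomial.eval_X] at e1 e2 e3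
  rw [show n - 1 + 2 = n + 1 by ring, show n - 1 + 1 = n by ring] at e2
  rw [show n - 2 + 2 = n by ring, show n - 2 + 1 = n - 1 by ring] at e3
  linear_combination -e1 - 2 * lam * e2 - e3

lemma U_neg_two_eval (lam : ℝ) :
    (Polynomial.Chebyshev.U ℝ (-2)).eval lam
      = -(Polynomial.Chebyshev.U ℝ 0).eval lam := by
  have e := congrArg (Polynomial.eval lam) (Polynomial.Chebyshev.U_add_two ℝ (-2))
  simp only [Polynomial.eval_sub, Polynomial.eval_mul, Polynomial.eval_ofNat,
    Polynomial.eval_X] at e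
  rw [show (-2 : ℤ) + 2 = 0 by ring, show (-2 : ℤ) + 1 = -1 by ring,
    Polynomial.Chebyshev.U_neg_one] at e
  simp only [Polynomial.eval_zero, mul_zero, zero_sub] at e
  linarith

lemma key_sum (lam : ℝ) (r : ℕ) :
    (2:ℝ) ^ (2*r) * lam ^ (2*r)
      = ∑ m ∈ Finset.range (r+1),
          bb r (m:ℤ) * (Polynomial.Chebyshev.U ℝ (2*(m:ℤ))).eval lam := by
  set u : ℤ → ℝ := fun n => (Polynomial.Chebyshev.U ℝ n).eval lam with hu
  induction r with
  | zero =>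
      simp only [Nat.zero_eq, Nat.mul_zero, pow_zero, zero_add, Finset.sum_range_one,
        Nat.cast_zero, mul_zero]
      have h0 : u 0 = 1 := by
        simp [hu, Polynomial.Chebyshev.U_zero]
      have hb : bb 0 0 = 1 := by
        unfold bb chZ
        norm_num
      rw [hb]
      norm_num [Polynomial.Chebyshev.U_zero]
  | succ r ih =>
      have hrec : ∀ m : ℤ, 4*lam^2*u (2*m) = u (2*m+2) + 2*u (2*m) + u (2*m-2) := by
        intro m
        have := U_eval_rec lam (2*m)
        simpa [hu] using this
      have h1 : (2:ℝ)^(2*(r+1))*lam^(2*(r+1))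
          = ∑ m ∈ Finset.range (r+1),
              bb r (m:ℤ) * (u (2*m+2) + 2*u (2*m) + u (2*m-2)) := by
        have h40 : (2:ℝ)^(2*(r+1))*lam^(2*(r+1)) = 4*lam^2*((2:ℝ)^(2*r)*lam^(2*r)) := by
          rw [show 2*(r+1) = 2*r+2 by ring]
          rw [pow_add, pow_add]; ring
        rw [h40, ih, Finset.mul_sum]
        exact Finset.sum_congr rfl fun m _ => by rw [← hrec]; ring
      rw [h1]
      have h2 : ∑ m ∈ Finset.range (r+1+1), bb (r+1) (m:ℤ) * u (2*m)
          = ∑ m ∈ Finset.range (r+2),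
              (bb r ((m:ℤ)-1) + 2*bb r (m:ℤ) + bb r ((m:ℤ)+1)) * u (2*m) := by
        apply Finset.sum_congr rfl
        intro m _
        rw [bb_rec]
      rw [h2]
      have expandR : ∑ m ∈ Finset.range (r+2),
            (bb r ((m:ℤ)-1) + 2*bb r (m:ℤ) + bb r ((m:ℤ)+1)) * u (2*m)
          = (∑ m ∈ Finset.range (r+2), bb r ((m:ℤ)-1) * u (2*m))
            + (∑ m ∈ Finset.range (r+2), 2*bb r (m:ℤ) * u (2*m))
            + (∑ m ∈ Finset.range (r+2), bb r ((m:ℤ)+1) * u (2*m)) := by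
        rw [← Finset.sum_add_distrib, ← Finset.sum_add_distrib]
        exact Finset.sum_congr rfl fun m _ => by ring
      have expandL : ∑ m ∈ Finset.range (r+1),
            bb r (m:ℤ) * (u (2*m+2) + 2*u (2*m) + u (2*m-2))
          = (∑ m ∈ Finset.range (r+1), bb r (m:ℤ) * u (2*m+2))
            + (∑ m ∈ Finset.range (r+1), 2*bb r (m:ℤ) * u (2*m))
            + (∑ m ∈ Finset.range (r+1), bb r (m:ℤ) * u (2*m-2)) := by
        rw [← Finset.sum_add_distrib, ← Finset.sum_add_distrib]
        exact Finset.sum_congr rfl fun m _ => by ring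
      rw [expandR, expandL]
      -- first sums
      have eA : ∑ m ∈ Finset.range (r+2), bb r ((m:ℤ)-1) * u (2*m)
          = (∑ m ∈ Finset.range (r+1), bb r (m:ℤ) * u (2*m+2)) + bb r (-1) * u 0 := by
        rw [Finset.sum_range_succ' (fun m : ℕ => bb r ((m:ℤ)-1) * u (2*m)) (r+1)]
        have e0 : bb r (((0:ℕ):ℤ)-1) * u (2*((0:ℕ):ℤ)) = bb r (-1) * u 0 := by norm_num
        rw [e0]
        congr 1
        apply Finset.sum_congr rfl
        intro m _
        rw [show ((m+1 : ℕ) : ℤ) = (m:ℤ)+1 by push_cast; ring]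
        rw [show ((m:ℤ)+1)-1 = (m:ℤ) by ring, show (2:ℤ)*((m:ℤ)+1) = 2*(m:ℤ)+2 by ring]
      -- second sums
      have eB : ∑ m ∈ Finset.range (r+2), 2*bb r (m:ℤ) * u (2*m)
          = ∑ m ∈ Finset.range (r+1), 2*bb r (m:ℤ) * u (2*m) := by
        rw [Finset.sum_range_succ]
        rw [bb_zero_of_gt r ((r+1 : ℕ) : ℤ) (by push_cast; omega)]
        ring
      -- third sums
      have eC : ∑ m ∈ Finset.range (r+2), bb r ((m:ℤ)+1) * u (2*m)
          = ∑ m ∈ Finset.range r, bb r ((m:ℤ)+1) * u (2*m) := by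
        rw [Finset.sum_range_succ, Finset.sum_range_succ]
        rw [bb_zero_of_gt r (((r+1 : ℕ) : ℤ)+1) (by push_cast; omega),
          bb_zero_of_gt r (((r : ℕ) : ℤ)+1) (by push_cast; omega)]
        ring
      have eD : ∑ m ∈ Finset.range (r+1), bb r (m:ℤ) * u (2*m-2)
          = (∑ m ∈ Finset.range r, bb r ((m:ℤ)+1) * u (2*m)) + bb r 0 * u (-2) := by
        rw [Finset.sum_range_succ' (fun m : ℕ => bb r (m:ℤ) * u (2*m-2)) r]
        have e0 : bb r ((0:ℕ):ℤ) * u (2*((0:ℕ):ℤ)-2) = bb r 0 * u (-2) := by norm_num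
        rw [e0]
        congr 1
        apply Finset.sum_congr rfl
        intro m _
        rw [show ((m+1 : ℕ) : ℤ) = (m:ℤ)+1 by push_cast; ring]
        rw [show (2:ℤ)*((m:ℤ)+1)-2 = 2*(m:ℤ) by ring]
      rw [eA, eB, eC, eD]
      have ecorr : bb r 0 * u (-2) = bb r (-1) * u 0 := by
        have h1 : u (-2) = -u 0 := by simpa [hu] using U_neg_two_eval lam
        rw [h1, bb_neg_one]; ring
      rw [ecorr]
      ring

lemma coeff_eq (r m : ℕ) (hm : m ≤ r) :
    ((2*r+1 : ℕ) : ℝ) * bb r (m:ℤ)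
      = ((2*m+1 : ℕ) : ℝ) * (Nat.choose (2*r+1) (r-m) : ℝ) := by
  have hch1 : chZ (2*r) ((r:ℤ) - (m:ℤ)) = (Nat.choose (2*r) (r-m) : ℝ) := by
    unfold chZ
    rw [if_pos (by omega)]
    have harg : (((r:ℤ) - (m:ℤ))).toNat = r - m := by omega
    rw [harg]
  unfold bb
  rw [hch1]
  rcases eq_or_lt_of_le hm with rfl | hlt
  · rw [chZ_eq_zero_of_lt _ _ (by push_cast; omega)]
    simp
  · -- m < r, set j+1 = r - m
    obtain ⟨j, hj⟩ : ∃ j : ℕ, r - m = j + 1 := ⟨r - m - 1, by omega⟩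
    have hch2 : chZ (2*r) ((r:ℤ) + (m:ℤ) + 1) = (Nat.choose (2*r) j : ℝ) := by
      unfold chZ
      rw [if_pos (by omega)]
      congr 1
      have hsymm : Nat.choose (2*r) (2*r - j) = Nat.choose (2*r) j :=
        Nat.choose_symm (by omega)
      rw [← hsymm]
      congr 1
      omega
    rw [hch2, hj]
    have F1 : (Nat.choose (2*r+1) (j+1) : ℝ)
        = (Nat.choose (2*r) (j+1) : ℝ) + (Nat.choose (2*r) j : ℝ) := by
      rw_mod_cast [Nat.choose_succ_succ']; omega
    have F2 : ((2*r+1 : ℕ) : ℝ) * (Nat.choose (2*r) j : ℝ)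
        = (Nat.choose (2*r+1) (j+1) : ℝ) * ((j:ℝ)+1) := by
      have := Nat.add_one_mul_choose_eq (2*r) j
      have := congrArg (fun x : ℕ => (x : ℝ)) this
      push_cast at this ⊢
      linarith
    have hmr : (m : ℝ) = (r : ℝ) - (j : ℝ) - 1 := by
      have : m + (j + 1) = r := by omega
      have := congrArg (fun x : ℕ => (x : ℝ)) this
      push_cast at this
      linarith
    push_cast at F1 F2 ⊢
    linear_combination -(2*(r:ℝ)+1) * F1 - 2*F2 - 2*(Nat.choose (2*r+1) (j+1) : ℝ)*hmr



/-- **Chebyshev expansion of even powers** (Snyder): for all real `λ` and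
integers `r ≥ 0`,
`λ^{2r} = (1/((2r+1)·2^{2r})) ∑_{m=0}^{r} (2m+1) C(2r+1, r-m) U_{2m}(λ)`. -/
theorem pow_even_eq_sum_chebyshevU (r : ℕ) (lam : ℝ) :
    lam ^ (2 * r)
      = (1 / (((2 * r + 1 : ℕ) : ℝ) * 2 ^ (2 * r))) *
          ∑ m ∈ Finset.range (r + 1),
            ((2 * m + 1 : ℕ) : ℝ) * (Nat.choose (2 * r + 1) (r - m) : ℝ) *
              (Polynomial.Chebyshev.U ℝ ((2 * m : ℕ) : ℤ)).eval lam := by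
  have hkey := key_sum lam r
  have hco : ∀ m ∈ Finset.range (r+1),
      ((2*m+1 : ℕ):ℝ) * (Nat.choose (2*r+1) (r-m) : ℝ)
          * (Polynomial.Chebyshev.U ℝ ((2*m : ℕ):ℤ)).eval lam
        = ((2*r+1 : ℕ):ℝ) * (bb r (m:ℤ)
            * (Polynomial.Chebyshev.U ℝ (2*(m:ℤ))).eval lam) := by
    intro m hm
    have hmr : m ≤ r := by
      have := Finset.mem_range.mp hm; omega
    have hc := coeff_eq r m hmr
    have hidx : ((2*m : ℕ) : ℤ) = 2*(m:ℤ) := by push_cast; ring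
    rw [hidx, ← hc]
    ring
  rw [Finset.sum_congr rfl hco, ← Finset.mul_sum, ← hkey]
  have h1 : ((2*r+1 : ℕ):ℝ) ≠ 0 := by positivity
  have h2 : (2:ℝ)^(2*r) ≠ 0 := by positivity
  field_simp
end

section
/- For any partition μ of n-1, the sum of dim ν over all partitions ν of n obtained from μ by adding a single outer corner equals n · dim μ. -/
open Finset

/-- A partition is encoded as an antitone, eventually-zero function
`l : ℕ → ℕ` (0-indexed row lengths).  `dimP n l` is the number of standard
Young tableaux of shape `l` (with `n = |l|`), realized as the number of
saturated chains `∅ = λ⁰ ≤ λ¹ ≤ ⋯ ≤ λⁿ = l` of Young diagrams in which each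
diagram is obtained from the previous one by adding a single box. -/
noncomputable def dimP (n : ℕ) (l : ℕ → ℕ) : ℕ :=
  Nat.card {T : Fin (n + 1) → ℕ → ℕ //
    (∀ j, T 0 j = 0) ∧ (∀ j, T (Fin.last n) j = l j) ∧
    (∀ k, Antitone (T k)) ∧
    (∀ k : Fin n, ∃ i, ∀ j,
      T k.succ j = T k.castSucc j + if j = i then 1 else 0)}

def ChP (n : ℕ) (l : ℕ → ℕ) :=
  {T : Fin (n + 1) → ℕ → ℕ //
    (∀ j, T 0 j = 0) ∧ (∀ j, T (Fin.last n) j = l j) ∧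
    (∀ k, Antitone (T k)) ∧
    (∀ k : Fin n, ∃ i, ∀ j,
      T k.succ j = T k.castSucc j + if j = i then 1 else 0)}


lemma dimP_eq (n : ℕ) (l : ℕ → ℕ) : dimP n l = Nat.card (ChP n l) := rfl

def addF (l : ℕ → ℕ) (i : ℕ) : ℕ → ℕ := fun j => if j = i then l j + 1 else l j
def subF (l : ℕ → ℕ) (i : ℕ) : ℕ → ℕ := fun j => l j - if j = i then 1 else 0

lemma chain_support {n : ℕ} {T : Fin (n+1) → ℕ → ℕ}
    (h0 : ∀ j, T 0 j = 0)
    (hanti : ∀ k, Antitone (T k))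
    (hstep : ∀ k : Fin n, ∃ i, ∀ j, T k.succ j = T k.castSucc j + if j = i then 1 else 0) :
    ∀ k : Fin (n+1), ∀ j, (k : ℕ) ≤ j → T k j = 0 := by
  intro k
  induction k using Fin.induction with
  | zero => intro j _; exact h0 j
  | succ k ih =>
    obtain ⟨i, hi⟩ := hstep k
    simp only [Fin.coe_castSucc] at ih
    have hik : i ≤ (k : ℕ) := by
      by_contra h
      push_neg at h
      have h1 : T k.succ i = 1 := by rw [hi i, ih i (le_of_lt h), if_pos rfl]
      have h2 : T k.succ (k : ℕ) = 0 := by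
        rw [hi (k : ℕ), ih (k : ℕ) le_rfl, if_neg (by omega)]
      have h3 := hanti k.succ (le_of_lt h)
      omega
    intro j hj
    have hks : (k.succ : ℕ) = (k : ℕ) + 1 := rfl
    rw [hi j, ih j (by omega), if_neg (by omega)]

lemma chain_bound {n : ℕ} {T : Fin (n+1) → ℕ → ℕ}
    (h0 : ∀ j, T 0 j = 0)
    (hstep : ∀ k : Fin n, ∃ i, ∀ j, T k.succ j = T k.castSucc j + if j = i then 1 else 0) :
    ∀ k : Fin (n+1), ∀ j, T k j ≤ (k : ℕ) := by
  intro k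
  induction k using Fin.induction with
  | zero => intro j; simp [h0 j]
  | succ k ih =>
    obtain ⟨i, hi⟩ := hstep k
    simp only [Fin.coe_castSucc] at ih
    intro j
    have hks : (k.succ : ℕ) = (k : ℕ) + 1 := rfl
    rw [hi j, hks]
    have := ih j
    split <;> omega

instance ChP.finite (n : ℕ) (l : ℕ → ℕ) : Finite (ChP n l) := by
  have key : ∀ T : ChP n l, ∀ k : Fin (n+1), ∀ j, T.1 k j < n + 1 := by
    intro T k j
    have h1 := chain_bound T.2.1 T.2.2.2.2 k j
    have := k.isLt
    omega
  let f : ChP n l → (Fin (n+1) → Fin (n+1) → Fin (n+1)) := fun T k j =>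
    ⟨T.1 k j, key T k j⟩
  apply Finite.of_injective f
  intro T₁ T₂ h
  apply Subtype.ext; funext k j
  by_cases hj : j ≤ n
  · have := congrFun (congrFun h k) ⟨j, by omega⟩
    simpa [f, Fin.ext_iff] using this
  · rw [chain_support T₁.2.1 T₁.2.2.2.1 T₁.2.2.2.2 k j (by have := k.isLt; omega),
        chain_support T₂.2.1 T₂.2.2.2.1 T₂.2.2.2.2 k j (by have := k.isLt; omega)]


def Rset (M : ℕ) (l : ℕ → ℕ) : Finset ℕ := (range M).filter (fun r => l (r+1) < l r)
def Aset (M : ℕ) (l : ℕ → ℕ) : Finset ℕ := (range M).filter (fun i => i = 0 ∨ l i < l (i-1))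

lemma mem_Rset {M : ℕ} {l : ℕ → ℕ} {r : ℕ} : r ∈ Rset M l ↔ r < M ∧ l (r+1) < l r := by
  simp [Rset, Finset.mem_filter, Finset.mem_range]

lemma mem_Aset {M : ℕ} {l : ℕ → ℕ} {i : ℕ} :
    i ∈ Aset M l ↔ i < M ∧ (i = 0 ∨ l i < l (i-1)) := by
  simp [Aset, Finset.mem_filter, Finset.mem_range]

noncomputable def extend (n : ℕ) (l : ℕ → ℕ) (hl : Antitone l) (i : ℕ) (hi : l (i+1) < l i)
    (D : ChP n (subF l i)) : ChP (n+1) l :=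
  ⟨Fin.lastCases (motive := fun _ : Fin (n+2) => ℕ → ℕ) l D.1, by
  refine ⟨?_, ?_, ?_, ?_⟩
  · intro j
    rw [show (0 : Fin (n+2)) = (0 : Fin (n+1)).castSucc from (Fin.castSucc_zero).symm,
      Fin.lastCases_castSucc]
    exact D.2.1 j
  · intro j; rw [Fin.lastCases_last]
  · intro k
    induction k using Fin.lastCases with
    | last => rw [Fin.lastCases_last]; exact hl
    | cast k' => rw [Fin.lastCases_castSucc]; exact D.2.2.2.1 k'
  · intro k
    induction k using Fin.lastCases with
    | last =>
      refine ⟨i, fun j => ?_⟩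
      rw [Fin.succ_last, Fin.lastCases_last, Fin.lastCases_castSucc]
      have hD : D.1 (Fin.last n) j = l j - if j = i then 1 else 0 := D.2.2.1 j
      rw [hD]
      have h1 : 1 ≤ l i := by omega
      by_cases hji : j = i
      · subst hji; rw [if_pos rfl]; omega
      · rw [if_neg hji]; omega
    | cast k' =>
      obtain ⟨i', hi'⟩ := D.2.2.2.2 k'
      refine ⟨i', fun j => ?_⟩
      rw [Fin.succ_castSucc, Fin.lastCases_castSucc, Fin.lastCases_castSucc]
      exact hi' j⟩

lemma extend_val (n : ℕ) (l : ℕ → ℕ) (hl : Antitone l) (i : ℕ) (hi : l (i+1) < l i)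
    (D : ChP n (subF l i)) :
    (extend n l hl i hi D).1 = Fin.lastCases (motive := fun _ : Fin (n+2) => ℕ → ℕ) l D.1 := rfl

lemma branching (n : ℕ) (l : ℕ → ℕ) (hl : Antitone l) :
    dimP (n+1) l = ∑ i ∈ Rset (n+1) l, dimP n (subF l i) := by
  classical
  set S := Rset (n+1) l with hS
  let f : (Σ i : {x // x ∈ S}, ChP n (subF l i.1)) → ChP (n+1) l := fun p =>
    extend n l hl p.1.1 (mem_Rset.mp p.1.2).2 p.2
  have hinj : Function.Injective f := by
    rintro ⟨⟨i, hiS⟩, D⟩ ⟨⟨i', hiS'⟩, D'⟩ h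
    have hval : ∀ k j, D.1 k j = D'.1 k j := by
      intro k j
      have := congrFun (congrFun (congrArg Subtype.val h) k.castSucc) j
      simpa [f, extend_val, Fin.lastCases_castSucc] using this
    have hii : i = i' := by
      by_contra hne
      have h1 := D.2.2.1 i
      have h2 := D'.2.2.1 i
      have h3 := hval (Fin.last n) i
      have h4 : l i ≥ 1 := by have := (mem_Rset.mp hiS).2; omega
      have e1 : subF l i i = l i - 1 := by simp [subF]
      have e2 : subF l i' i = l i := by simp [subF, hne]
      rw [e1] at h1; rw [e2] at h2
      omega
    subst hii
    have : D = D' := Subtype.ext (funext fun k => funext fun j => hval k j)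
    rw [this]
  have hsurj : Function.Surjective f := by
    rintro ⟨T, hT0, hTlast, hTanti, hTstep⟩
    obtain ⟨i, hi⟩ := hTstep (Fin.last n)
    have hstep' : ∀ j, l j = T (Fin.last n).castSucc j + if j = i then 1 else 0 := by
      intro j
      have := hi j
      rw [Fin.succ_last] at this
      rw [← hTlast j]
      exact this
    have hMsupp : ∀ j, n ≤ j → T (Fin.last n).castSucc j = 0 := by
      intro j hj
      exact chain_support hT0 hTanti hTstep (Fin.last n).castSucc j
        (by simp only [Fin.coe_castSucc, Fin.val_last]; omega)
    have hl' : Antitone l := fun a b hab => by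
      rw [← hTlast, ← hTlast]; exact hTanti _ hab
    have hin : i < n + 1 := by
      by_contra hbig
      push_neg at hbig
      have h1 := hstep' i
      rw [hMsupp i (by omega), if_pos rfl] at h1
      have h2 := hstep' n
      rw [hMsupp n le_rfl, if_neg (by omega)] at h2
      have := hl' (show n ≤ i by omega)
      omega
    have hcorner : l (i+1) < l i := by
      have h1 := hstep' i
      rw [if_pos rfl] at h1
      have h2 := hstep' (i+1)
      rw [if_neg (by omega)] at h2
      have h3 : T (Fin.last n).castSucc (i+1) ≤ T (Fin.last n).castSucc i :=
        hTanti _ (by omega)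
      omega
    refine ⟨⟨⟨i, mem_Rset.mpr ⟨hin, hcorner⟩⟩,
      ⟨fun k => T k.castSucc, ?_, ?_, ?_, ?_⟩⟩, ?_⟩
    · intro j
      show T (0 : Fin (n+1)).castSucc j = 0
      rw [Fin.castSucc_zero]; exact hT0 j
    · intro j
      show T (Fin.last n).castSucc j = subF l i j
      have hj := hstep' j
      simp only [subF]
      by_cases hji : j = i
      · rw [if_pos hji] at hj ⊢
        omega
      · rw [if_neg hji] at hj ⊢
        omega
    · intro k; exact hTanti k.castSucc
    · intro k
      obtain ⟨i', hi'⟩ := hTstep k.castSucc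
      refine ⟨i', fun j => ?_⟩
      show T k.succ.castSucc j = T k.castSucc.castSucc j + if j = i' then 1 else 0
      rw [show k.succ.castSucc = k.castSucc.succ from (Fin.succ_castSucc k).symm]
      exact hi' j
    · apply Subtype.ext
      rw [extend_val]
      funext k
      induction k using Fin.lastCases with
      | last => funext j; rw [Fin.lastCases_last]; exact (hTlast j).symm
      | cast k' => rw [Fin.lastCases_castSucc]
  calc dimP (n+1) l = Nat.card (Σ i : {x // x ∈ S}, ChP n (subF l i.1)) := by
        rw [dimP_eq]
        exact (Nat.card_eq_of_bijective f ⟨hinj, hsurj⟩).symm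
    _ = ∑ i ∈ S, dimP n (subF l i) := by
        letI : ∀ i : {x // x ∈ S}, Fintype (ChP n (subF l i.1)) := fun i => Fintype.ofFinite _
        rw [Nat.card_eq_fintype_card, Fintype.card_sigma,
          ← Finset.sum_coe_sort S (fun i => dimP n (subF l i))]
        exact Finset.sum_congr rfl fun i _ => by rw [dimP_eq, Nat.card_eq_fintype_card]

-- ### partition predicate
def IsP (n : ℕ) (l : ℕ → ℕ) : Prop :=
  Antitone l ∧ ∃ K, l K = 0 ∧ ∑ i ∈ range K, l i = n

lemma IsP.anti {n l} (h : IsP n l) : Antitone l := h.1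

lemma IsP.zero_of_ge {n : ℕ} {l : ℕ → ℕ} (h : IsP n l) {j : ℕ} (hj : n ≤ j) : l j = 0 := by
  obtain ⟨hl, K, hK, hs⟩ := h
  by_contra hne
  have hlj : 1 ≤ l j := by omega
  have hjK : j < K := by
    by_contra h'
    push_neg at h'
    have := hl h'
    omega
  have h2 : ∑ i ∈ range (j+1), l i ≤ ∑ i ∈ range K, l i :=
    Finset.sum_le_sum_of_subset (Finset.range_subset_range.mpr (by omega))
  have h3 : j + 1 ≤ ∑ i ∈ range (j+1), l i := by
    calc j + 1 = ∑ _i ∈ range (j+1), 1 := by simp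
    _ ≤ ∑ i ∈ range (j+1), l i := by
        apply Finset.sum_le_sum
        intro i hi
        rw [Finset.mem_range] at hi
        have := hl (show i ≤ j by omega)
        omega
  omega

lemma sum_range_eq_of_zero {l : ℕ → ℕ} {K M : ℕ} (hl : Antitone l) (hK : l K = 0)
    (h : K ≤ M) : ∑ i ∈ range M, l i = ∑ i ∈ range K, l i := by
  refine (Finset.sum_subset (Finset.range_subset_range.mpr h) ?_).symm
  intro x hx hnx
  rw [Finset.mem_range] at hx hnx
  have := hl (show K ≤ x by omega)
  omega

-- ### congruence of corner sets
lemma Rset_congr {l : ℕ → ℕ} (hl : Antitone l) {K1 K2 M1 M2 : ℕ}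
    (h1 : l K1 = 0) (h2 : l K2 = 0) (hM1 : K1 ≤ M1) (hM2 : K2 ≤ M2) :
    Rset M1 l = Rset M2 l := by
  have key : ∀ K, l K = 0 → ∀ r, l (r+1) < l r → r < K := by
    intro K hK r hc
    by_contra hh
    push_neg at hh
    have := hl hh
    omega
  ext r
  rw [mem_Rset, mem_Rset]
  constructor
  · rintro ⟨_, hc⟩; exact ⟨by have := key K2 h2 r hc; omega, hc⟩
  · rintro ⟨_, hc⟩; exact ⟨by have := key K1 h1 r hc; omega, hc⟩

lemma Aset_congr {l : ℕ → ℕ} (hl : Antitone l) {K1 K2 M1 M2 : ℕ}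
    (h1 : l K1 = 0) (h2 : l K2 = 0) (hM1 : K1 < M1) (hM2 : K2 < M2) :
    Aset M1 l = Aset M2 l := by
  have key : ∀ K, l K = 0 → ∀ i, (i = 0 ∨ l i < l (i-1)) → i ≤ K := by
    intro K hK i hc
    rcases hc with rfl | hc
    · omega
    · by_contra hh
      push_neg at hh
      have := hl (show K ≤ i - 1 by omega)
      omega
  ext i
  rw [mem_Aset, mem_Aset]
  constructor
  · rintro ⟨_, hc⟩; exact ⟨by have := key K2 h2 i hc; omega, hc⟩
  · rintro ⟨_, hc⟩; exact ⟨by have := key K1 h1 i hc; omega, hc⟩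

-- ### counting corners
lemma card_Aset {n : ℕ} {l : ℕ → ℕ} (h : IsP (n+1) l) :
    (Aset (n+2) l).card = (Rset (n+2) l).card + 1 := by
  classical
  have hz : ∀ j, n+1 ≤ j → l j = 0 := fun j hj => h.zero_of_ge hj
  have himg : Aset (n+2) l = insert 0 ((Rset (n+2) l).image Nat.succ) := by
    ext i
    simp only [mem_Aset, Finset.mem_insert, Finset.mem_image, mem_Rset]
    constructor
    · rintro ⟨hiM, h0 | hc⟩
      · left; exact h0
      · right
        have hi1 : 1 ≤ i := by
          rcases Nat.eq_zero_or_pos i with rfl | h'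
          · simp at hc
          · exact h'
        refine ⟨i - 1, ⟨by omega, ?_⟩, by omega⟩
        have e : i - 1 + 1 = i := by omega
        rw [e]
        exact hc
    · rintro (rfl | ⟨r, ⟨hr, hc⟩, rfl⟩)
      · exact ⟨by omega, Or.inl rfl⟩
      · refine ⟨?_, Or.inr ?_⟩
        · have : r < n + 1 := by
            by_contra hh
            push_neg at hh
            rw [hz r hh] at hc
            omega
          omega
        · have e : r.succ - 1 = r := by omega
          rw [e]
          have e2 : r.succ = r + 1 := rfl
          rw [e2]
          exact hc
  rw [himg, Finset.card_insert_of_notMem (by simp),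
    Finset.card_image_of_injective _ Nat.succ_injective]

-- ### pointwise algebra of addF/subF
lemma subF_addF_self (l : ℕ → ℕ) (a : ℕ) : subF (addF l a) a = l := by
  funext j
  simp only [subF, addF]
  by_cases hj : j = a
  · subst hj; simp only [eq_self_iff_true, if_true]; omega
  · simp only [if_neg hj]; omega

lemma addF_subF_self {l : ℕ → ℕ} {r : ℕ} (h : 1 ≤ l r) : addF (subF l r) r = l := by
  funext j
  simp only [subF, addF]
  by_cases hj : j = r
  · subst hj; simp only [eq_self_iff_true, if_true]; omega
  · simp only [if_neg hj]; omega

lemma subF_addF_comm {l : ℕ → ℕ} {a r : ℕ} (hne : r ≠ a) :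
    subF (addF l a) r = addF (subF l r) a := by
  funext j
  simp only [subF, addF]
  split_ifs <;> omega

lemma addF_antitone {l : ℕ → ℕ} (hl : Antitone l) {a : ℕ}
    (ha : a = 0 ∨ l a < l (a-1)) : Antitone (addF l a) := by
  apply antitone_nat_of_succ_le
  intro x
  simp only [addF]
  by_cases h1 : x + 1 = a
  · subst h1
    simp only [eq_self_iff_true, if_true, if_neg (show ¬ x = x + 1 by omega)]
    have h2 : l (x+1) < l x := by
      rcases ha with h' | h'
      · omega
      · have e : x + 1 - 1 = x := by omega
        rwa [e] at h'
    omega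
  · simp only [if_neg h1]
    have h2 : l (x+1) ≤ l x := hl (by omega)
    by_cases h3 : x = a
    · simp only [if_pos h3]; omega
    · simp only [if_neg h3]; omega

-- ### IsP is preserved
lemma IsP_subF {n : ℕ} {l : ℕ → ℕ} {r : ℕ} (h : IsP (n+1) l) (hr : l (r+1) < l r) :
    IsP n (subF l r) := by
  obtain ⟨hl, K, hK, hs⟩ := h
  constructor
  · apply antitone_nat_of_succ_le
    intro x
    simp only [subF]
    have h1 : l (x+1) ≤ l x := hl (by omega)
    by_cases h2 : x = r
    · subst h2
      simp only [eq_self_iff_true, if_true, if_neg (show ¬ x + 1 = x by omega)]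
      omega
    · by_cases h3 : x + 1 = r
      · subst h3
        simp only [eq_self_iff_true, if_true, if_neg (show ¬ x = x + 1 by omega)]
        omega
      · simp only [if_neg h3, if_neg h2]
        omega
  · refine ⟨max K (r+1), ?_, ?_⟩
    · have hKm : K ≤ max K (r+1) := le_max_left _ _
      have : l (max K (r+1)) ≤ l K := hl hKm
      simp only [subF]
      rw [if_neg (show ¬ max K (r+1) = r by omega)]
      omega
    · have hKm : K ≤ max K (r+1) := le_max_left _ _
      have hsum1 : ∑ i ∈ range (max K (r+1)), l i = n + 1 := by
        rw [sum_range_eq_of_zero hl hK hKm, hs]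
      have hptw : ∀ i ∈ range (max K (r+1)),
          subF l r i + (if i = r then 1 else 0) = l i := by
        intro i _
        simp only [subF]
        by_cases hir : i = r
        · subst hir
          simp only [eq_self_iff_true, if_true]
          omega
        · simp only [if_neg hir]
          omega
      have hind : ∑ i ∈ range (max K (r+1)), (if i = r then 1 else 0) = 1 := by
        rw [Finset.sum_ite_eq' (range (max K (r+1))) r (fun _ => 1)]
        rw [if_pos (Finset.mem_range.mpr (by omega))]
      have := Finset.sum_congr rfl hptw
      rw [Finset.sum_add_distrib] at this
      rw [show (range (max K (r+1))).sum l = ∑ i ∈ range (max K (r+1)), l i from rfl] at this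
      omega

-- ### corner memberships
lemma self_mem_Rset_addF {l : ℕ → ℕ} (hl : Antitone l) {M a : ℕ} (ha : a < M) :
    a ∈ Rset M (addF l a) := by
  rw [mem_Rset]
  refine ⟨ha, ?_⟩
  simp only [addF, eq_self_iff_true, if_true, if_neg (show ¬ a + 1 = a by omega)]
  have := hl (show a ≤ a + 1 by omega)
  omega

lemma self_mem_Aset_subF {l : ℕ → ℕ} (hl : Antitone l) {M r : ℕ} (hrM : r < M)
    (hr : l (r+1) < l r) : r ∈ Aset M (subF l r) := by
  rw [mem_Aset]
  refine ⟨hrM, ?_⟩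
  rcases Nat.eq_zero_or_pos r with rfl | hr1
  · exact Or.inl rfl
  · right
    simp only [subF, eq_self_iff_true, if_true, if_neg (show ¬ r - 1 = r by omega)]
    have := hl (show r - 1 ≤ r by omega)
    omega

-- ### the key pair-swap
lemma swap_mem {l : ℕ → ℕ} (hl : Antitone l) {M a r : ℕ} (hne : r ≠ a) :
    (a ∈ Aset M l ∧ r ∈ Rset M (addF l a)) ↔ (r ∈ Rset M l ∧ a ∈ Aset M (subF l r)) := by
  simp only [mem_Aset, mem_Rset, addF, subF]
  by_cases hb : r + 1 = a
  · subst hb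
    have h1 : l (r+1) ≤ l r := hl (by omega)
    simp only [Nat.add_sub_cancel, eq_self_iff_true, if_true,
      if_neg (show ¬ r = r + 1 by omega), if_neg (show ¬ r + 1 = r by omega)]
    omega
  · have h1 : l (r+1) ≤ l r := hl (by omega)
    have h2 : l a ≤ l (a-1) := hl (by omega)
    simp only [if_neg hb, if_neg hne, if_neg (show ¬ a = r from fun hh => hne hh.symm),
      if_neg (show ¬ a - 1 = r by omega)]
    omega

-- ### base case dimensions
lemma dimP_zero (l : ℕ → ℕ) (hz : ∀ j, l j = 0) : dimP 0 l = 1 := by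
  rw [dimP_eq, Nat.card_eq_one_iff_unique]
  constructor
  · constructor
    intro T T'
    apply Subtype.ext; funext k j
    have hk : k = 0 := Fin.eq_zero k
    rw [hk, T.2.1 j, T'.2.1 j]
  · exact ⟨⟨fun _ _ => 0, fun j => rfl, fun j => (hz j).symm,
      fun _ => antitone_const, fun k => k.elim0⟩⟩

lemma dimP_one (l : ℕ → ℕ) (hz : ∀ j, l j = 0) : dimP 1 (addF l 0) = 1 := by
  rw [dimP_eq, Nat.card_eq_one_iff_unique]
  have haz : ∀ j, addF l 0 j = if j = 0 then 1 else 0 := fun j => by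
    simp [addF, hz j]
  constructor
  · constructor
    intro T T'
    apply Subtype.ext; funext k j
    have hk : k = 0 ∨ k = Fin.last 1 := by
      have h1 : (k : ℕ) = 0 ∨ (k : ℕ) = 1 := by omega
      rcases h1 with h1 | h1
      · left; exact Fin.ext h1
      · right; exact Fin.ext (by simp [h1])
    rcases hk with rfl | rfl
    · rw [T.2.1 j, T'.2.1 j]
    · rw [T.2.2.1 j, T'.2.2.1 j]
  · refine ⟨⟨fun k j => if k = 0 then 0 else addF l 0 j, ?_, ?_, ?_, ?_⟩⟩
    · intro j
      show (if (0 : Fin 2) = 0 then (0:ℕ) else addF l 0 j) = 0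
      rw [if_pos rfl]
    · intro j
      show (if (Fin.last 1 : Fin 2) = 0 then (0:ℕ) else addF l 0 j) = addF l 0 j
      rw [if_neg (show ¬ (Fin.last 1 : Fin 2) = 0 by decide)]
    · intro k
      by_cases hk : k = 0
      · simp only [if_pos hk]; exact antitone_const
      · simp only [if_neg hk]
        intro x y hxy
        show addF l 0 y ≤ addF l 0 x
        rw [haz, haz]
        split_ifs <;> omega
    · intro k
      have hk : k = 0 := Fin.eq_zero k
      subst hk
      refine ⟨0, fun j => ?_⟩
      show (if ((0 : Fin 1).succ : Fin 2) = 0 then (0:ℕ) else addF l 0 j)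
        = (if ((0 : Fin 1).castSucc : Fin 2) = 0 then (0:ℕ) else addF l 0 j)
          + if j = 0 then 1 else 0
      rw [if_neg (show ¬ ((0 : Fin 1).succ : Fin 2) = 0 by decide),
        if_pos (show ((0 : Fin 1).castSucc : Fin 2) = 0 by decide),
        haz j, zero_add]

-- ### the main induction
lemma main_lemma : ∀ n : ℕ, ∀ l : ℕ → ℕ, IsP n l →
    ∑ a ∈ Aset (n+1) l, dimP (n+1) (addF l a) = (n+1) * dimP n l := by
  intro n
  induction n with
  | zero =>
    intro l h
    have hz : ∀ j, l j = 0 := fun j => h.zero_of_ge (Nat.zero_le j)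
    have hA : Aset 1 l = {0} := by
      ext i
      rw [mem_Aset, Finset.mem_singleton]
      constructor
      · rintro ⟨h1, _⟩; omega
      · rintro rfl; exact ⟨by omega, Or.inl rfl⟩
    rw [hA, Finset.sum_singleton]
    show dimP 1 (addF l 0) = 1 * dimP 0 l
    rw [dimP_zero l hz, dimP_one l hz, one_mul]
  | succ m IH =>
    intro l h
    have hl : Antitone l := h.1
    have hz : ∀ j, m + 1 ≤ j → l j = 0 := fun j hj => h.zero_of_ge hj
    -- branch each augmented shape
    have hbr : ∀ a ∈ Aset (m+2) l,
        dimP (m+2) (addF l a)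
          = dimP (m+1) l
            + ∑ r ∈ (Rset (m+2) (addF l a)).erase a, dimP (m+1) (subF (addF l a) r) := by
      intro a ha
      rw [branching (m+1) (addF l a) (addF_antitone hl (mem_Aset.mp ha).2)]
      rw [← Finset.add_sum_erase _ _ (self_mem_Rset_addF hl (mem_Aset.mp ha).1),
        subF_addF_self]
    rw [Finset.sum_congr rfl hbr, Finset.sum_add_distrib, Finset.sum_const, smul_eq_mul]
    -- swap the double sum
    have hswap :
        ∑ a ∈ Aset (m+2) l, ∑ r ∈ (Rset (m+2) (addF l a)).erase a,
            dimP (m+1) (subF (addF l a) r)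
          = ∑ r ∈ Rset (m+2) l, ∑ a ∈ (Aset (m+2) (subF l r)).erase r,
              dimP (m+1) (addF (subF l r) a) := by
      rw [Finset.sum_sigma' (Aset (m+2) l) (fun a => (Rset (m+2) (addF l a)).erase a)
          (fun a r => dimP (m+1) (subF (addF l a) r)),
        Finset.sum_sigma' (Rset (m+2) l) (fun r => (Aset (m+2) (subF l r)).erase r)
          (fun r a => dimP (m+1) (addF (subF l r) a))]
      refine Finset.sum_nbij' (fun p => ⟨p.2, p.1⟩) (fun q => ⟨q.2, q.1⟩) ?_ ?_ ?_ ?_ ?_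
      · rintro ⟨a, r⟩ hp
        rw [Finset.mem_sigma] at hp ⊢
        obtain ⟨ha, hr⟩ := hp
        rw [Finset.mem_erase] at hr
        have hkey := (swap_mem hl hr.1).mp ⟨ha, hr.2⟩
        exact ⟨hkey.1, Finset.mem_erase.mpr ⟨fun hh => hr.1 hh.symm, hkey.2⟩⟩
      · rintro ⟨r, a⟩ hq
        rw [Finset.mem_sigma] at hq ⊢
        obtain ⟨hrr, haa⟩ := hq
        rw [Finset.mem_erase] at haa
        have hkey := (swap_mem hl (show r ≠ a from fun hh => haa.1 hh.symm)).mpr ⟨hrr, haa.2⟩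
        exact ⟨hkey.1, Finset.mem_erase.mpr ⟨fun hh => haa.1 hh.symm, hkey.2⟩⟩
      · rintro ⟨a, r⟩ _; rfl
      · rintro ⟨r, a⟩ _; rfl
      · rintro ⟨a, r⟩ hp
        rw [Finset.mem_sigma] at hp
        have hne : r ≠ a := (Finset.mem_erase.mp hp.2).1
        rw [subF_addF_comm hne]
    rw [hswap]
    -- evaluate the inner sums via the induction hypothesis
    have key : ∀ r ∈ Rset (m+2) l,
        ∑ a ∈ (Aset (m+2) (subF l r)).erase r, dimP (m+1) (addF (subF l r) a)
            + dimP (m+1) l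
          = (m+1) * dimP m (subF l r) := by
      intro r hr
      obtain ⟨hrM, hrc⟩ := mem_Rset.mp hr
      have hsub : IsP m (subF l r) := IsP_subF h hrc
      have hrA : r ∈ Aset (m+2) (subF l r) := self_mem_Aset_subF hl hrM hrc
      have hAe : addF (subF l r) r = l := addF_subF_self (by omega)
      have hIH := IH (subF l r) hsub
      rw [← Aset_congr hsub.1 (hsub.zero_of_ge le_rfl) (hsub.zero_of_ge le_rfl)
        (show m < m + 2 by omega) (show m < m + 1 by omega)] at hIH
      rw [← Finset.add_sum_erase _ _ hrA, hAe] at hIH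
      exact (add_comm _ _).trans hIH
    have hsum2 := Finset.sum_congr rfl key
    rw [Finset.sum_add_distrib, Finset.sum_const, smul_eq_mul, ← Finset.mul_sum] at hsum2
    have hbl : dimP (m+1) l = ∑ r ∈ Rset (m+2) l, dimP m (subF l r) := by
      rw [branching m l hl,
        Rset_congr hl (hz (m+1) le_rfl) (hz (m+1) le_rfl) (le_refl (m+1))
          (show m + 1 ≤ m + 2 by omega)]
    rw [← hbl] at hsum2
    rw [card_Aset h]
    set d := dimP (m+1) l with hd
    set c := (Rset (m+2) l).card with hc
    set X := ∑ r ∈ Rset (m+2) l, ∑ a ∈ (Aset (m+2) (subF l r)).erase r,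
      dimP (m+1) (addF (subF l r) a) with hX
    calc (c + 1) * d + X = X + c * d + d := by ring
      _ = (m+1) * d + d := by rw [hsum2]
      _ = (m + 1 + 1) * d := by ring

/-- **Dual branching rule.** For a partition `μ ⊢ n - 1` (encoded by `l`,
`n ≥ 1`), the sum of `dim ν` over all partitions `ν ⊢ n` obtained from `μ` by
adding a single outer corner (a box at a row `i` with `i = 0` or
`μ_{i-1} > μ_i`) equals `n · dim μ`. -/
theorem sum_dim_add_corner (n N : ℕ) (hn : 1 ≤ n) (l : ℕ → ℕ)
    (hl : Antitone l) (hN : l N = 0)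
    (hsize : ∑ i ∈ Finset.range N, l i = n - 1) :
    ∑ i ∈ (Finset.range (N + 1)).filter (fun i => i = 0 ∨ l i < l (i - 1)),
        dimP n (fun j => if j = i then l j + 1 else l j)
      = n * dimP (n - 1) l := by
  obtain ⟨m, rfl⟩ : ∃ m, n = m + 1 := ⟨n - 1, by omega⟩
  have hP : IsP m l := ⟨hl, N, hN, by simpa using hsize⟩
  have hmain := main_lemma m l hP
  show ∑ i ∈ Aset (N+1) l, dimP (m+1) (addF l i) = (m+1) * dimP ((m+1) - 1) l
  rw [show (m+1) - 1 = m from rfl]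
  rw [Aset_congr hl hN (hP.zero_of_ge le_rfl) (show N < N + 1 by omega)
    (show m < m + 1 by omega)]
  exact hmain
end

section
/- The number of tuples (a_1, …, a_l) with entries in {1, …, n-1} satisfying a_i ≠ a_{i+1} for all i, such that the product (a_1 n)(a_2 n)⋯(a_l n) = 1 in S_n, equals (1/n!) · tr P_l^{n-1}(X_n), where tr is the trace in the left regular representation of S_n and P_l^{n-1} is the modified Chebyshev polynomial (P_0=1, P_1(x)=x, P_2(x)=x²-(n-1), P_l = x P_{l-1} - (n-2) P_{l-2}). In particular this number is 0 when l is odd. -/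
open Polynomial

/-- Tuples `(a_1, …, a_l)` of letters distinct from the top letter `n`, with
`a_i ≠ a_{i+1}` for all `i`, whose associated product of star transpositions
`(a_1 n)(a_2 n)⋯(a_l n)` is the identity.  (We work in
`S_{n+1} = Perm (Fin (n+1))`; the top letter is `Fin.last n`.) -/
noncomputable def solTuples (n l : ℕ) : Finset (Fin l → Fin (n + 1)) := by
  classical
  exact Finset.univ.filter (fun a =>
    (∀ i, a i ≠ Fin.last n) ∧
    (∀ i : Fin l, ∀ h : (i : ℕ) + 1 < l, a i ≠ a ⟨(i : ℕ) + 1, h⟩) ∧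
    ((List.finRange l).map (fun i => Equiv.swap (a i) (Fin.last n))).prod = 1)

namespace SolAux

open MonoidAlgebra

variable (n : ℕ)

abbrev Gp (n : ℕ) := Equiv.Perm (Fin (n + 1))
abbrev Alg (n : ℕ) := MonoidAlgebra ℚ (Gp n)

/-- The top Jucys–Murphy element. -/
noncomputable def XX (n : ℕ) : Alg n :=
  ∑ a ∈ Finset.univ.filter (fun a : Fin (n + 1) => a ≠ Fin.last n),
    MonoidAlgebra.of ℚ (Gp n) (Equiv.swap a (Fin.last n))

/-- Product of star transpositions associated to a tuple. -/
def pswap (n l : ℕ) (f : Fin l → Fin (n + 1)) : Gp n :=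
  ((List.finRange l).map (fun i => Equiv.swap (f i) (Fin.last n))).prod

/-- Non-backtracking tuples avoiding the top letter. -/
def okT (n l : ℕ) (f : Fin l → Fin (n + 1)) : Prop :=
  (∀ i, f i ≠ Fin.last n) ∧
    ∀ i : Fin l, ∀ h : (i : ℕ) + 1 < l, f i ≠ f ⟨(i : ℕ) + 1, h⟩

open Classical in
/-- Sum over non-backtracking tuples of the corresponding group elements. -/
noncomputable def W (n l : ℕ) : Alg n :=
  ∑ f : Fin l → Fin (n + 1),
    if okT n l f then MonoidAlgebra.of ℚ (Gp n) (pswap n l f) else 0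

lemma sum_pi_succ {M : Type*} [AddCommMonoid M] (l : ℕ)
    (F : (Fin (l + 1) → Fin (n + 1)) → M) :
    ∑ f, F f = ∑ b : Fin (n + 1), ∑ a : Fin l → Fin (n + 1), F (Fin.cons b a) := by
  rw [show (∑ f, F f)
        = ∑ p : Fin (n + 1) × (Fin l → Fin (n + 1)), F (Fin.cons p.1 p.2) from
      (Fintype.sum_equiv (Fin.consEquiv fun _ => Fin (n + 1))
        (fun p : Fin (n + 1) × (Fin l → Fin (n + 1)) => F (Fin.cons p.1 p.2)) F
        (fun p => rfl)).symm, Fintype.sum_prod_type]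

lemma pswap_cons (l : ℕ) (b : Fin (n + 1)) (a : Fin l → Fin (n + 1)) :
    pswap n (l + 1) (Fin.cons b a)
      = Equiv.swap b (Fin.last n) * pswap n l a := by
  have e : ((fun i => Equiv.swap (Fin.cons b a i) (Fin.last n)) ∘ Fin.succ)
      = fun i : Fin l => Equiv.swap (a i) (Fin.last n) := by
    funext i; simp [Fin.cons_succ]
  simp [pswap, List.finRange_succ, List.map_map, e]

lemma okT_cons (l : ℕ) (b : Fin (n + 1)) (a : Fin l → Fin (n + 1)) :
    okT n (l + 1) (Fin.cons b a)
      ↔ b ≠ Fin.last n ∧ okT n l a ∧ ∀ h : 0 < l, b ≠ a ⟨0, h⟩ := by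
  constructor
  · rintro ⟨h1, h2⟩
    refine ⟨by simpa using h1 0, ⟨fun i => by simpa using h1 i.succ, ?_⟩, ?_⟩
    · intro i h
      have h' : ((i.succ : Fin (l + 1)) : ℕ) + 1 < l + 1 := by
        simp [Fin.val_succ]; omega
      have := h2 i.succ h'
      have e1 : (⟨((i.succ : Fin (l+1)) : ℕ) + 1, h'⟩ : Fin (l + 1))
          = Fin.succ ⟨(i : ℕ) + 1, h⟩ := by
        ext; simp [Fin.val_succ]
      rw [e1, Fin.cons_succ, Fin.cons_succ] at this
      exact this
    · intro h
      have h' : ((0 : Fin (l + 1)) : ℕ) + 1 < l + 1 := by simpa using h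
      have := h2 0 h'
      have e1 : (⟨((0 : Fin (l+1)) : ℕ) + 1, h'⟩ : Fin (l + 1))
          = Fin.succ ⟨0, h⟩ := by ext; simp
      rw [e1, Fin.cons_succ, Fin.cons_zero] at this
      exact this
  · rintro ⟨hb, ⟨ha1, ha2⟩, hba⟩
    constructor
    · intro i
      refine Fin.cases ?_ ?_ i
      · simpa using hb
      · intro j; simpa using ha1 j
    · intro i
      refine Fin.cases ?_ ?_ i
      · intro h
        have h0 : 0 < l := by simpa using h
        have e1 : (⟨((0 : Fin (l+1)) : ℕ) + 1, h⟩ : Fin (l + 1))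
            = Fin.succ ⟨0, h0⟩ := by ext; simp
        rw [e1, Fin.cons_succ, Fin.cons_zero]
        exact hba h0
      · intro j h
        have hj : (j : ℕ) + 1 < l := by simpa [Fin.val_succ] using h
        have e1 : (⟨((j.succ : Fin (l+1)) : ℕ) + 1, h⟩ : Fin (l + 1))
            = Fin.succ ⟨(j : ℕ) + 1, hj⟩ := by ext; simp [Fin.val_succ]
        rw [e1, Fin.cons_succ, Fin.cons_succ]
        exact ha2 j hj

attribute [local instance] Classical.propDecidable

/-- The "backtracking" correction term. -/
noncomputable def D (n l : ℕ) : Alg n :=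
  ∑ b : Fin (n + 1), ∑ a : Fin l → Fin (n + 1),
    if (b ≠ Fin.last n ∧ okT n l a) ∧ ¬(∀ h : 0 < l, b ≠ a ⟨0, h⟩)
    then MonoidAlgebra.of ℚ (Gp n) (Equiv.swap b (Fin.last n) * pswap n l a) else 0

lemma ite_split {M : Type*} [AddCommMonoid M] (P Q : Prop) [Decidable P]
    [Decidable Q] [Decidable (P ∧ Q)] [Decidable (P ∧ ¬Q)] (v : M) :
    (if P then v else 0) = (if P ∧ Q then v else 0) + (if P ∧ ¬Q then v else 0) := by
  by_cases hP : P <;> by_cases hQ : Q <;> simp [hP, hQ]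

lemma mul_W (l : ℕ) :
    XX n * W n l
      = ∑ b : Fin (n + 1), ∑ a : Fin l → Fin (n + 1),
          if b ≠ Fin.last n ∧ okT n l a
          then MonoidAlgebra.of ℚ (Gp n)
            (Equiv.swap b (Fin.last n) * pswap n l a) else 0 := by
  rw [XX, W, Finset.sum_mul_sum, Finset.sum_filter]
  refine Finset.sum_congr rfl fun b _ => ?_
  rw [show (if b ≠ Fin.last n then
        ∑ a : Fin l → Fin (n + 1),
          MonoidAlgebra.of ℚ (Gp n) (Equiv.swap b (Fin.last n)) *
            (if okT n l a then MonoidAlgebra.of ℚ (Gp n) (pswap n l a) else 0)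
      else 0)
      = ∑ a : Fin l → Fin (n + 1),
          if b ≠ Fin.last n then
            MonoidAlgebra.of ℚ (Gp n) (Equiv.swap b (Fin.last n)) *
              (if okT n l a then MonoidAlgebra.of ℚ (Gp n) (pswap n l a) else 0)
          else 0 from by split <;> simp]
  refine Finset.sum_congr rfl fun a _ => ?_
  by_cases hb : b ≠ Fin.last n <;> by_cases ha : okT n l a <;>
    simp [hb, ha, map_mul]

lemma W_succ (l : ℕ) :
    W n (l + 1)
      = ∑ b : Fin (n + 1), ∑ a : Fin l → Fin (n + 1),
          if (b ≠ Fin.last n ∧ okT n l a) ∧ (∀ h : 0 < l, b ≠ a ⟨0, h⟩)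
          then MonoidAlgebra.of ℚ (Gp n)
            (Equiv.swap b (Fin.last n) * pswap n l a) else 0 := by
  rw [W, sum_pi_succ]
  refine Finset.sum_congr rfl fun b _ => Finset.sum_congr rfl fun a _ => ?_
  rw [pswap_cons]
  refine if_congr ?_ rfl rfl
  rw [okT_cons]
  tauto

lemma mul_W_eq (l : ℕ) : XX n * W n l = W n (l + 1) + D n l := by
  rw [mul_W, W_succ, D, ← Finset.sum_add_distrib]
  refine Finset.sum_congr rfl fun b _ => ?_
  rw [← Finset.sum_add_distrib]
  refine Finset.sum_congr rfl fun a _ => ?_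
  exact ite_split _ (∀ h : 0 < l, b ≠ a ⟨0, h⟩) _

lemma D_zero : D n 0 = 0 := by
  rw [D]
  refine Finset.sum_eq_zero fun b _ => Finset.sum_eq_zero fun a _ => ?_
  have h : (∀ h : (0:ℕ) < 0, b ≠ a ⟨0, h⟩) := fun h => absurd h (by omega)
  simp [h]

lemma sum_ite_card {ι M : Type*} [Fintype ι] [AddCommMonoid M]
    (P : ι → Prop) [DecidablePred P] (v : M) :
    (∑ c : ι, if P c then v else 0) = (Finset.univ.filter P).card • v := by
  rw [← Finset.sum_filter, Finset.sum_const]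

lemma card_ne_last :
    (Finset.univ.filter (fun c : Fin (n + 1) => c ≠ Fin.last n)).card = n := by
  rw [Finset.filter_ne', Finset.card_erase_of_mem (Finset.mem_univ _)]
  simp

lemma card_ne_last_ne (x : Fin (n + 1)) (hx : x ≠ Fin.last n) :
    (Finset.univ.filter
      (fun c : Fin (n + 1) => c ≠ Fin.last n ∧ c ≠ x)).card = n - 1 := by
  have e : Finset.univ.filter (fun c : Fin (n + 1) => c ≠ Fin.last n ∧ c ≠ x)
      = (Finset.univ.erase (Fin.last n)).erase x := by
    ext c
    simp [Finset.mem_erase, and_comm]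
  rw [e, Finset.card_erase_of_mem (by simp [Finset.mem_erase, hx]),
    Finset.card_erase_of_mem (Finset.mem_univ _)]
  simp

lemma pswap_tail (k : ℕ) (a : Fin (k + 1) → Fin (n + 1)) :
    pswap n (k + 1) a
      = Equiv.swap (a 0) (Fin.last n) * pswap n k (Fin.tail a) := by
  conv_lhs => rw [← Fin.cons_self_tail a]
  rw [pswap_cons]

lemma D_succ_aux (k : ℕ) :
    D n (k + 1)
      = ∑ a : Fin (k + 1) → Fin (n + 1),
          if okT n (k + 1) a
          then MonoidAlgebra.of ℚ (Gp n) (pswap n k (Fin.tail a)) else 0 := by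
  rw [D, Finset.sum_comm]
  refine Finset.sum_congr rfl fun a _ => ?_
  have key : ∀ b : Fin (n + 1),
      (if (b ≠ Fin.last n ∧ okT n (k + 1) a) ∧
          ¬(∀ h : 0 < k + 1, b ≠ a ⟨0, h⟩)
        then MonoidAlgebra.of ℚ (Gp n)
          (Equiv.swap b (Fin.last n) * pswap n (k + 1) a) else 0)
      = (if b = a 0 then
          (if okT n (k + 1) a then
            MonoidAlgebra.of ℚ (Gp n)
              (Equiv.swap b (Fin.last n) * pswap n (k + 1) a) else 0) else 0) := by
    intro b
    by_cases hb : b = a 0 <;> by_cases ha : okT n (k + 1) a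
    · have hbl : b ≠ Fin.last n := hb ▸ ha.1 0
      have hnot : ¬(∀ h : 0 < k + 1, b ≠ a ⟨0, h⟩) := fun h => h (Nat.succ_pos k) hb
      rw [if_pos ⟨⟨hbl, ha⟩, hnot⟩, if_pos hb, if_pos ha]
    · have hna : ¬(((b ≠ Fin.last n ∧ okT n (k + 1) a) ∧
          ¬(∀ h : 0 < k + 1, b ≠ a ⟨0, h⟩))) := fun h => ha h.1.2
      rw [if_neg hna, if_pos hb, if_neg ha]
    · have hfa : (∀ h : 0 < k + 1, b ≠ a ⟨0, h⟩) := fun _ => hb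
      rw [if_neg (fun h => h.2 hfa), if_neg hb]
    · have hna : ¬(((b ≠ Fin.last n ∧ okT n (k + 1) a) ∧
          ¬(∀ h : 0 < k + 1, b ≠ a ⟨0, h⟩))) := fun h => ha h.1.2
      rw [if_neg hna, if_neg hb]
  rw [Finset.sum_congr rfl fun b _ => key b, Finset.sum_ite_eq' Finset.univ]
  rw [if_pos (Finset.mem_univ _)]
  by_cases ha : okT n (k + 1) a
  · rw [if_pos ha, if_pos ha, pswap_tail, ← mul_assoc, Equiv.swap_mul_self, one_mul]
  · rw [if_neg ha, if_neg ha]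

lemma D_one : D n 1 = (n : ℚ) • 1 := by
  rw [D_succ_aux, sum_pi_succ]
  have key : ∀ c : Fin (n + 1), ∀ a : Fin 0 → Fin (n + 1),
      (if okT n 1 (Fin.cons c a : Fin 1 → Fin (n + 1))
        then MonoidAlgebra.of ℚ (Gp n)
          (pswap n 0 (Fin.tail (Fin.cons c a : Fin 1 → Fin (n + 1)))) else 0)
      = (if c ≠ Fin.last n then (1 : Alg n) else 0) := by
    intro c a
    have h1 : okT n 1 (Fin.cons c a : Fin 1 → Fin (n + 1)) ↔ c ≠ Fin.last n := by
      rw [okT_cons]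
      have h0 : okT n 0 a := ⟨fun i => i.elim0, fun i => i.elim0⟩
      have h2 : (∀ h : (0:ℕ) < 0, c ≠ a ⟨0, h⟩) := fun h => absurd h (by omega)
      simp [h0, h2]
    have h2 : pswap n 0 (Fin.tail (Fin.cons c a : Fin 1 → Fin (n + 1))) = 1 := by
      simp [pswap]
    rw [h2, map_one]
    exact if_congr h1 rfl rfl
  rw [Finset.sum_congr rfl fun c _ => Finset.sum_congr rfl fun a _ => key c a]
  rw [Finset.sum_congr rfl fun c _ =>
    (Finset.sum_const (if c ≠ Fin.last n then (1 : Alg n) else 0))]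
  have hcard : Fintype.card (Fin 0 → Fin (n + 1)) = 1 := by simp
  simp only [Finset.card_univ, hcard, one_smul]
  rw [sum_ite_card, card_ne_last, Nat.cast_smul_eq_nsmul]

lemma D_two (k : ℕ) : D n (k + 2) = ((n : ℚ) - 1) • W n (k + 1) := by
  rw [D_succ_aux, sum_pi_succ, Finset.sum_comm, W, Finset.smul_sum]
  refine Finset.sum_congr rfl fun a _ => ?_
  have key : ∀ c : Fin (n + 1),
      (if okT n (k + 2) (Fin.cons c a : Fin (k + 2) → Fin (n + 1))
        then MonoidAlgebra.of ℚ (Gp n)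
          (pswap n (k + 1) (Fin.tail (Fin.cons c a : Fin (k + 2) → Fin (n + 1))))
        else 0)
      = (if okT n (k + 1) a then
          (if c ≠ Fin.last n ∧ c ≠ a 0
            then MonoidAlgebra.of ℚ (Gp n) (pswap n (k + 1) a) else 0) else 0) := by
    intro c
    have ht : Fin.tail (Fin.cons c a : Fin (k + 2) → Fin (n + 1)) = a := by
      funext i; simp [Fin.tail]
    rw [ht]
    have hok : okT n (k + 2) (Fin.cons c a : Fin (k + 2) → Fin (n + 1))
        ↔ c ≠ Fin.last n ∧ okT n (k + 1) a ∧ c ≠ a 0 := by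
      rw [okT_cons]
      constructor
      · rintro ⟨h1, h2, h3⟩
        exact ⟨h1, h2, h3 (Nat.succ_pos k)⟩
      · rintro ⟨h1, h2, h3⟩
        exact ⟨h1, h2, fun _ => h3⟩
    by_cases ha : okT n (k + 1) a <;>
      by_cases hc : c ≠ Fin.last n ∧ c ≠ a 0
    · rw [if_pos (hok.mpr ⟨hc.1, ha, hc.2⟩), if_pos ha, if_pos hc]
    · rw [if_neg (fun h => hc ⟨(hok.mp h).1, (hok.mp h).2.2⟩), if_pos ha, if_neg hc]
    · rw [if_neg (fun h => ha (hok.mp h).2.1), if_neg ha]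
    · rw [if_neg (fun h => ha (hok.mp h).2.1), if_neg ha]
  rw [Finset.sum_congr rfl fun c _ => key c]
  by_cases ha : okT n (k + 1) a
  · simp only [ha, if_true]
    rw [sum_ite_card, card_ne_last_ne n (a 0) (ha.1 0)]
    have hn : 1 ≤ n := by
      rcases Nat.eq_zero_or_pos n with rfl | hn
      · exact absurd (Subsingleton.elim (α := Fin 1) (a 0) (Fin.last 0)) (ha.1 0)
      · exact hn
    rw [← Nat.cast_smul_eq_nsmul ℚ, Nat.cast_sub hn, Nat.cast_one]
  · simp [ha]

lemma W_zero : W n 0 = 1 := by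
  have h1 : okT n 0 (fun i : Fin 0 => i.elim0) := ⟨fun i => i.elim0, fun i => i.elim0⟩
  rw [W]
  rw [Fintype.sum_eq_single (fun i : Fin 0 => i.elim0)
    (fun f hf => absurd (_root_.funext fun i : Fin 0 => i.elim0) hf)]
  simp [h1, pswap, MonoidAlgebra.one_def]

lemma W_one : W n 1 = XX n := by
  have h := mul_W_eq n 0
  rw [W_zero, D_zero, mul_one, add_zero] at h
  exact h.symm

lemma W_two : W n 2 = XX n * XX n - (n : ℚ) • 1 := by
  have h := mul_W_eq n 1
  rw [D_one, W_one] at h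
  rw [h]
  abel

lemma W_rec (k : ℕ) :
    W n (k + 3) = XX n * W n (k + 2) - ((n : ℚ) - 1) • W n (k + 1) := by
  have h := mul_W_eq n (k + 2)
  rw [D_two] at h
  rw [h]
  abel

lemma aeval_modCheb : ∀ l : ℕ, Polynomial.aeval (XX n) (modCheb (n : ℚ) l) = W n l
  | 0 => by simp [modCheb, W_zero]
  | 1 => by simp [modCheb, W_one]
  | 2 => by
      rw [modCheb, map_sub, map_pow, aeval_X, aeval_C, W_two, sq,
        Algebra.algebraMap_eq_smul_one]
  | (k + 3) => by
      rw [modCheb, map_sub, map_mul, map_mul, aeval_X, aeval_C,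
        aeval_modCheb (k + 2), aeval_modCheb (k + 1), W_rec,
        ← Algebra.smul_def]

lemma trace_mulLeft (x : Alg n) :
    LinearMap.trace ℚ (Alg n) (LinearMap.mulLeft ℚ x)
      = ((Nat.factorial (n + 1) : ℚ)) * x.coeff 1 := by
  let b : Module.Basis (Gp n) ℚ (Alg n) := MonoidAlgebra.basis (Gp n) ℚ
  rw [LinearMap.trace_eq_matrix_trace ℚ b, Matrix.trace]
  have key : ∀ g : Gp n,
      Matrix.diag ((LinearMap.toMatrix b b) (LinearMap.mulLeft ℚ x)) g = x.coeff 1 := by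
    intro g
    rw [Matrix.diag_apply, LinearMap.toMatrix_apply, LinearMap.mulLeft_apply]
    have hb : b g = (MonoidAlgebra.single g 1 : Alg n) := by
      simp only [b]
      rfl
    rw [hb]
    have hr : (b.repr (x * (MonoidAlgebra.single g 1 : Alg n))) g
        = (x * (MonoidAlgebra.single g 1 : Alg n)).coeff g := rfl
    rw [hr, MonoidAlgebra.mul_single_apply]
    simp
  rw [Finset.sum_congr rfl fun g _ => key g, Finset.sum_const, Finset.card_univ]
  simp [Fintype.card_perm, nsmul_eq_mul, mul_comm]

lemma W_apply_one (l : ℕ) :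
    (W n l).coeff 1 = ((solTuples n l).card : ℚ) := by
  have hc : (solTuples n l).card
      = ∑ f : Fin l → Fin (n + 1),
          if ((∀ i, f i ≠ Fin.last n) ∧
              (∀ i : Fin l, ∀ h : (i : ℕ) + 1 < l, f i ≠ f ⟨(i : ℕ) + 1, h⟩) ∧
              ((List.finRange l).map
                (fun i => Equiv.swap (f i) (Fin.last n))).prod = 1)
            then 1 else 0 := by
    rw [solTuples, Finset.card_filter]
  rw [W]
  have happ : ((∑ f : Fin l → Fin (n + 1),
        if okT n l f then (MonoidAlgebra.of ℚ (Gp n)) (pswap n l f) else 0) : Alg n).coeff 1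
      = ∑ f : Fin l → Fin (n + 1),
          (if okT n l f then (MonoidAlgebra.of ℚ (Gp n)) (pswap n l f)
            else (0 : Alg n)).coeff 1 := by
    rw [MonoidAlgebra.coeff_sum, Finsupp.finset_sum_apply]
  rw [happ, hc]
  push_cast
  refine Finset.sum_congr rfl fun f _ => ?_
  by_cases hok : okT n l f
  · rw [if_pos hok]
    by_cases hp : pswap n l f = 1
    · rw [if_pos ⟨hok.1, hok.2, hp⟩, MonoidAlgebra.of_apply, hp]
      exact Finsupp.single_eq_same
    · rw [if_neg (fun h => hp h.2.2), MonoidAlgebra.of_apply]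
      exact Finsupp.single_eq_of_ne (Ne.symm hp)
  · rw [if_neg hok, if_neg (fun h => hok ⟨h.1, h.2.1⟩)]
    rfl

end SolAux

/-- **Counting non-backtracking solutions via modified moments.** The number
of tuples `(a_1, …, a_l)` of letters `≠ n` with `a_i ≠ a_{i+1}` such that
`(a_1 n)⋯(a_l n) = 1` in `S_{n+1}` equals
`(1/(n+1)!) · tr P_l^{n}(X)`, where `X = ∑_{a ≠ n} (a n)` is the top
Jucys–Murphy element and `tr` is the trace in the left regular representation
of `S_{n+1}`.  In particular this number is `0` when `l` is odd. -/
theorem card_solTuples_eq_trace (n l : ℕ) :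
    ((solTuples n l).card : ℚ)
        = (1 / (Nat.factorial (n + 1) : ℚ)) *
            LinearMap.trace ℚ (MonoidAlgebra ℚ (Equiv.Perm (Fin (n + 1))))
              (LinearMap.mulLeft ℚ
                (Polynomial.aeval
                  (∑ a ∈ Finset.univ.filter
                      (fun a : Fin (n + 1) => a ≠ Fin.last n),
                    MonoidAlgebra.of ℚ (Equiv.Perm (Fin (n + 1)))
                      (Equiv.swap a (Fin.last n)))
                  (modCheb (n : ℚ) l)))
      ∧ (Odd l → (solTuples n l).card = 0) := by
  constructor
  · have hX : (∑ a ∈ Finset.univ.filter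
        (fun a : Fin (n + 1) => a ≠ Fin.last n),
          MonoidAlgebra.of ℚ (Equiv.Perm (Fin (n + 1)))
            (Equiv.swap a (Fin.last n))) = SolAux.XX n := rfl
    rw [hX, SolAux.trace_mulLeft, SolAux.aeval_modCheb, SolAux.W_apply_one]
    rw [one_div, inv_mul_cancel_left₀
      (Nat.cast_ne_zero.mpr (Nat.factorial_ne_zero _))]
  · intro hodd
    rw [Finset.card_eq_zero, Finset.eq_empty_iff_forall_notMem]
    intro f hf
    rw [solTuples, Finset.mem_filter] at hf
    obtain ⟨-, h1, -, h3⟩ := hf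
    have hsw : ∀ g ∈ (List.finRange l).map
        (fun i => Equiv.swap (f i) (Fin.last n)), g.IsSwap := by
      intro g hg
      rw [List.mem_map] at hg
      obtain ⟨i, -, rfl⟩ := hg
      exact ⟨f i, Fin.last n, h1 i, rfl⟩
    have hs := Equiv.Perm.sign_prod_list_swap hsw
    rw [h3, List.length_map, List.length_finRange, Odd.neg_one_pow hodd,
      map_one] at hs
    exact absurd hs (by decide)
end
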